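/- arXiv:2205.13799 — 2 statements merged into one kernel-verified Lean document; each statement's English description precedes it below -/
import Mathlib

section
/- Let $\Phi:[n]^m \to \mathbb{R}_{\geq 0}$ be a function that is invariant under permutations of its $m$ arguments, and suppose $|\Phi(J)-\Phi(J')| \leq c$ whenever the multisets $J, J' \in [n]^m$ differ in exactly one element. If $J=(J_1,\dots,J_m)$ is a sequence of $m$ indices sampled uniformly at random from $[n]$ without replacement, then for all $\epsilon > 0$, $\Pr[\Phi(J) - \mathbb{E}[\Phi(J)] > \epsilon] \leq \exp(-2\epsilon^2/(m c^2))$. -/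
/-!
Reveal the sample from the back: conditionally on the last `m` coordinates of a uniform
injective sequence of length `m + 1`, its head is uniform on the unused values, so by
Hoeffding's lemma its contribution to the moment generating function of `Φ - 𝔼 Φ` is at most
`exp (t² c² / 8)`. Averaging `Φ` over the head yields a function of the last `m` coordinates
that is again symmetric with bounded differences `c`: two tails that differ in one place differ
by a transposition of values, which matches their sets of admissible heads. By induction the
moment generating function is at most `exp (t² m c² / 8)`, and Chernoff's bound with
`t = 4 ε / (m c²)` gives the tail estimate.
-/

open Finset Real Equiv MeasureTheory ProbabilityTheory
open Function (Injective)
open scoped BigOperators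

variable {α : Type*} {m : ℕ}

lemma PMF.integral_uniformOfFintype {β : Type*} [Fintype β] [Nonempty β] [MeasurableSpace β]
    [MeasurableSingletonClass β] (f : β → ℝ) :
    ∫ x, f x ∂(PMF.uniformOfFintype β).toMeasure = 𝔼 x, f x := by
  simp [PMF.integral_eq_sum, Fintype.expect_eq_sum_div_card, Finset.mul_sum, div_eq_inv_mul]

lemma Fintype.expect_exp_mul_sub_expect_le {β : Type*} [Fintype β] (f : β → ℝ) {c : ℝ}
    (hf : ∀ a b, f a - f b ≤ c) (t : ℝ) :
    𝔼 a, exp (t * (f a - 𝔼 b, f b)) ≤ exp (t ^ 2 * c ^ 2 / 8) := by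
  rcases isEmpty_or_nonempty β with _ | _
  · simp [(exp_pos _).le]
  let _ : MeasurableSpace β := ⊤
  obtain ⟨a₀, -, ha₀⟩ := exists_min_image univ f univ_nonempty
  have hc : 0 ≤ c := by simpa using hf a₀ a₀
  have hoeffding := (hasSubgaussianMGF_of_mem_Icc (μ := (PMF.uniformOfFintype β).toMeasure)
    (X := f) (a := f a₀) (b := f a₀ + c) Measurable.of_discrete.aemeasurable
    (ae_of_all _ fun a => ⟨ha₀ a (mem_univ a), by linarith [hf a a₀]⟩)).mgf_le t
  simp only [mgf, PMF.integral_uniformOfFintype] at hoeffding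
  convert hoeffding using 2
  simp only [add_sub_cancel_left, NNReal.coe_pow, NNReal.coe_div, coe_nnnorm, norm_eq_abs,
    abs_of_nonneg hc, NNReal.coe_ofNat]
  ring

lemma Fintype.card_filter_lt_div_card_le {β : Type*} [Fintype β] (f : β → ℝ) {ε t : ℝ}
    (ht : 0 ≤ t) :
    (#{x | ε < f x} : ℝ) / Fintype.card β ≤ exp (-(t * ε)) * 𝔼 x, exp (t * f x) := by
  rw [card_filter, Nat.cast_sum, ← Fintype.expect_eq_sum_div_card, mul_expect]
  refine expect_le_expect fun x _ => ?_
  rw [← exp_add, neg_add_eq_sub, ← mul_sub]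
  split_ifs with h
  · exact_mod_cast one_le_exp (mul_nonneg ht (sub_nonneg.2 h.le))
  · exact_mod_cast (exp_pos _).le

lemma Fintype.expect_sigma_of_card_eq {ι : Type*} {κ : ι → Type*} [Fintype ι]
    [∀ i, Fintype (κ i)] {N : ℕ} (hN : ∀ i, Fintype.card (κ i) = N)
    (f : (Σ i, κ i) → ℝ) :
    𝔼 x, f x = 𝔼 i, 𝔼 k, f ⟨i, k⟩ := by
  simp only [Fintype.expect_eq_sum_div_card, Fintype.card_sigma, hN, sum_const, card_univ,
    smul_eq_mul, Fintype.sum_sigma, ← sum_div, div_div, Nat.cast_mul, mul_comm]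

lemma eq_swap_comp_of_forall_ne [DecidableEq α] {J J' : Fin m → α} (hJ : Injective J)
    (hJ' : Injective J') {i : Fin m} (h : ∀ k, k ≠ i → J k = J' k) :
    J' = swap (J i) (J' i) ∘ J := by
  funext k
  by_cases hk : k = i
  · simp [hk]
  · rw [Function.comp_apply, swap_apply_of_ne_of_ne (hJ.ne hk) (h k hk ▸ hJ'.ne hk), h k hk]

lemma Fin.cons_comp_decomposeFin_symm (a : α) (J : Fin m → α) (σ : Perm (Fin m)) :
    Fin.cons a J ∘ Perm.decomposeFin.symm (0, σ) = Fin.cons a (J ∘ σ) := by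
  funext k
  refine Fin.cases ?_ (fun i => ?_) k <;> simp

lemma Fintype.card_subtype_notMem_range [Fintype α] [DecidableEq α] {J : Fin m → α}
    (hJ : Injective J) :
    Fintype.card {a // a ∉ Set.range J} = Fintype.card α - m := by
  rw [Fintype.card_subtype_compl, Set.card_range_of_injective hJ, Fintype.card_fin]

lemma expect_embeddingFinSucc [Fintype α] [DecidableEq α] (F : (Fin (m + 1) → α) → ℝ) :
    𝔼 e : Fin (m + 1) ↪ α, F e =
      𝔼 e : Fin m ↪ α, 𝔼 a : {a // a ∉ Set.range e}, F (Fin.cons a e) := by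
  have hcard (e : Fin m ↪ α) := Fintype.card_subtype_notMem_range e.injective
  refine (Fintype.expect_equiv (embeddingFinSucc m α) _ (fun x => F (Fin.cons x.2 x.1))
    fun e => ?_).trans (Fintype.expect_sigma_of_card_eq hcard _)
  rw [← Equiv.coe_embeddingFinSucc_symm, Equiv.symm_apply_apply]

namespace SamplingWithoutReplacement

def PermInvariant (Φ : (Fin m → α) → ℝ) : Prop :=
  ∀ (J : Fin m → α) (σ : Perm (Fin m)), Φ (J ∘ σ) = Φ J

def BoundedDiffOnInjective (Φ : (Fin m → α) → ℝ) (c : ℝ) : Prop :=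
  ∀ J J' : Fin m → α, Injective J → Injective J' →
    ∀ i : Fin m, (∀ k, k ≠ i → J k = J' k) → |Φ J - Φ J'| ≤ c

variable [DecidableEq α]

lemma abs_sub_swap_comp_le_of_notMem_range {Φ : (Fin m → α) → ℝ} {c : ℝ}
    (hdiff : BoundedDiffOnInjective Φ c) {K : Fin m → α} (hK : Injective K) (p : Fin m)
    {y : α} (hy : y ∉ Set.range K) : |Φ K - Φ (swap (K p) y ∘ K)| ≤ c := by
  refine hdiff _ _ hK ((swap _ _).injective.comp hK) p fun k hk => ?_
  rw [Function.comp_apply, swap_apply_of_ne_of_ne (hK.ne hk) fun h => hy ⟨k, h⟩]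

lemma abs_sub_swap_comp_le {Φ : (Fin m → α) → ℝ} {c : ℝ} (hc : 0 ≤ c)
    (hperm : PermInvariant Φ) (hdiff : BoundedDiffOnInjective Φ c) {K : Fin m → α}
    (hK : Injective K) (x y : α) : |Φ K - Φ (swap x y ∘ K)| ≤ c := by
  by_cases hx : x ∈ Set.range K <;> by_cases hy : y ∈ Set.range K
  · obtain ⟨⟨p, rfl⟩, ⟨q, rfl⟩⟩ := And.intro hx hy
    rwa [hK.swap_comp, hperm, sub_self, abs_zero]
  · obtain ⟨p, rfl⟩ := hx
    exact abs_sub_swap_comp_le_of_notMem_range hdiff hK p hy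
  · obtain ⟨q, rfl⟩ := hy
    rw [swap_comm]
    exact abs_sub_swap_comp_le_of_notMem_range hdiff hK q hx
  · have hfix : swap x y ∘ K = K := funext fun k =>
      swap_apply_of_ne_of_ne (fun h => hx ⟨k, h⟩) fun h => hy ⟨k, h⟩
    rwa [hfix, sub_self, abs_zero]

variable [Fintype α]

/-- The conditional expectation of `Φ` given the last `m` coordinates. -/
noncomputable def averageCons (Φ : (Fin (m + 1) → α) → ℝ) (J : Fin m → α) : ℝ :=
  𝔼 a : {a // a ∉ Set.range J}, Φ (Fin.cons a J)

lemma averageCons_swap_comp (Φ : (Fin (m + 1) → α) → ℝ) (J : Fin m → α) (x y : α) :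
    averageCons Φ (swap x y ∘ J) =
      𝔼 a : {a // a ∉ Set.range J}, Φ (swap x y ∘ Fin.cons a J) := by
  refine (Fintype.expect_equiv ((swap x y).subtypeEquiv fun a => ?_) _ _ fun a => ?_).symm
  · rw [Set.range_comp, Set.mem_image_equiv]
    simp
  · simp [Fin.comp_cons]

lemma PermInvariant.averageCons {Φ : (Fin (m + 1) → α) → ℝ} (hperm : PermInvariant Φ) :
    PermInvariant (averageCons Φ) := fun J σ =>
  Fintype.expect_equiv (Equiv.subtypeEquivRight fun a => by rw [EquivLike.range_comp]) _ _
    fun a => by rw [← Fin.cons_comp_decomposeFin_symm, hperm]; rfl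

lemma BoundedDiffOnInjective.averageCons {Φ : (Fin (m + 1) → α) → ℝ} {c : ℝ}
    (hc : 0 ≤ c) (hperm : PermInvariant Φ) (hdiff : BoundedDiffOnInjective Φ c) :
    BoundedDiffOnInjective (averageCons Φ) c := by
  intro J J' hJ hJ' i h
  rw [eq_swap_comp_of_forall_ne hJ hJ' h, averageCons_swap_comp,
    SamplingWithoutReplacement.averageCons, ← expect_sub_distrib]
  obtain hempty | hne := (univ : Finset {a // a ∉ Set.range J}).eq_empty_or_nonempty
  · simpa [hempty] using hc
  refine (abs_expect_le _ _).trans (expect_le hne fun a _ => ?_)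
  exact abs_sub_swap_comp_le hc hperm hdiff (Fin.cons_injective_iff.2 ⟨a.2, hJ⟩) _ _

theorem expect_exp_mul_sub_expect_le {Φ : (Fin m → α) → ℝ} {c : ℝ}
    (hperm : PermInvariant Φ) (hdiff : BoundedDiffOnInjective Φ c) (t : ℝ) :
    𝔼 e : Fin m ↪ α, exp (t * (Φ e - 𝔼 e' : Fin m ↪ α, Φ e')) ≤
      exp (t ^ 2 * m * c ^ 2 / 8) := by
  induction m with
  | zero => simp
  | succ m ih =>
    rcases isEmpty_or_nonempty (Fin (m + 1) ↪ α) with _ | ⟨⟨e₀⟩⟩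
    · simp [(exp_pos _).le]
    have hc : 0 ≤ c := by
      simpa using hdiff e₀ e₀ e₀.injective e₀.injective 0 fun _ _ => rfl
    set g := averageCons Φ
    set μ := 𝔼 e : Fin m ↪ α, g e
    have hhead (e : Fin m ↪ α) : 𝔼 a : {a // a ∉ Set.range e},
        exp (t * (Φ (Fin.cons a e) - g e)) ≤ exp (t ^ 2 * c ^ 2 / 8) := by
      refine Fintype.expect_exp_mul_sub_expect_le _ (fun a b => ?_) t
      refine (abs_le.1 (hdiff _ _ (Fin.cons_injective_iff.2 ⟨a.2, e.injective⟩)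
        (Fin.cons_injective_iff.2 ⟨b.2, e.injective⟩) 0 fun k hk => ?_)).2
      obtain ⟨k, rfl⟩ := Fin.exists_succ_eq.2 hk
      rfl
    calc 𝔼 e : Fin (m + 1) ↪ α, exp (t * (Φ e - 𝔼 e' : Fin (m + 1) ↪ α, Φ e'))
        = 𝔼 e : Fin m ↪ α, exp (t * (g e - μ)) *
            𝔼 a : {a // a ∉ Set.range e}, exp (t * (Φ (Fin.cons a e) - g e)) := by
          rw [show 𝔼 e : Fin (m + 1) ↪ α, Φ e = μ from expect_embeddingFinSucc Φ]
          refine (expect_embeddingFinSucc fun K => exp (t * (Φ K - μ))).trans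
            (expect_congr rfl fun e _ => ?_)
          rw [mul_expect]
          refine expect_congr rfl fun a _ => ?_
          rw [← exp_add]
          ring_nf
      _ ≤ 𝔼 e : Fin m ↪ α, exp (t * (g e - μ)) * exp (t ^ 2 * c ^ 2 / 8) :=
          expect_le_expect fun e _ => mul_le_mul_of_nonneg_left (hhead e) (exp_pos _).le
      _ ≤ exp (t ^ 2 * m * c ^ 2 / 8) * exp (t ^ 2 * c ^ 2 / 8) := by
          rw [← expect_mul]
          exact mul_le_mul_of_nonneg_right (ih hperm.averageCons (hdiff.averageCons hc hperm))
            (exp_pos _).le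
      _ = exp (t ^ 2 * (m + 1 : ℕ) * c ^ 2 / 8) := by
          rw [← exp_add]
          push_cast
          ring_nf

end SamplingWithoutReplacement

open SamplingWithoutReplacement

open Classical Finset Real in
theorem generalized_mcdiarmid_general (n m : ℕ)
    (Φ : (Fin m → Fin n) → ℝ) (c ε : ℝ) (hε : 0 < ε)
    (hperm : ∀ (J : Fin m → Fin n) (σ : Equiv.Perm (Fin m)), Φ (J ∘ σ) = Φ J)
    (hdiff : ∀ J J' : Fin m → Fin n, Function.Injective J → Function.Injective J' →
      ∀ i : Fin m, (∀ k, k ≠ i → J k = J' k) → |Φ J - Φ J'| ≤ c) :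
    ((Finset.univ.filter (fun J : {J : Fin m → Fin n // Function.Injective J} =>
        Φ J.1 - (∑ J' : {J : Fin m → Fin n // Function.Injective J}, Φ J'.1) /
          (Fintype.card {J : Fin m → Fin n // Function.Injective J}) > ε)).card : ℝ) /
      (Fintype.card {J : Fin m → Fin n // Function.Injective J}) ≤
    Real.exp (-2 * ε ^ 2 / (m * c ^ 2)) := by
  have hemb (F : (Fin m → Fin n) → ℝ) : 𝔼 J : {J : Fin m → Fin n // Injective J}, F J.1 =
      𝔼 e : Fin m ↪ Fin n, F e :=
    Fintype.expect_equiv (subtypeInjectiveEquivEmbedding _ _) _ _ fun _ => rfl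
  set t := 4 * ε / (m * c ^ 2)
  have ht : 0 ≤ t := by positivity
  -- when `m * c ^ 2 = 0`, both `t` and the right-hand side are `0` by the convention `x / 0 = 0`
  have hexponent : -(t * ε) + t ^ 2 * m * c ^ 2 / 8 = -2 * ε ^ 2 / (m * c ^ 2) := by
    rcases eq_or_ne ((m : ℝ) * c ^ 2) 0 with h | h
    · simp [t, h]
    · simp only [t]
      field_simp
      ring
  rw [← Fintype.expect_eq_sum_div_card]
  calc _ ≤ exp (-(t * ε)) * 𝔼 J : {J : Fin m → Fin n // Injective J},
          exp (t * (Φ J.1 - 𝔼 J' : {J : Fin m → Fin n // Injective J}, Φ J'.1)) :=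
        Fintype.card_filter_lt_div_card_le _ ht
    _ = exp (-(t * ε)) *
          𝔼 e : Fin m ↪ Fin n, exp (t * (Φ e - 𝔼 e' : Fin m ↪ Fin n, Φ e')) := by
        rw [hemb Φ, hemb fun K => exp (t * (Φ K - 𝔼 e' : Fin m ↪ Fin n, Φ e'))]
    _ ≤ exp (-(t * ε)) * exp (t ^ 2 * m * c ^ 2 / 8) :=
        mul_le_mul_of_nonneg_left (expect_exp_mul_sub_expect_le hperm hdiff t) (exp_pos _).le
    _ = _ := by rw [← exp_add, hexponent]

open Classical Finset Real in
/-- Generalized McDiarmid inequality for sampling without replacement: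
if `Φ : [n]^m → ℝ≥0` is permutation-invariant with bounded differences `c` under
single-coordinate replacement, and `J` is a uniform injective sequence of `m`
indices from `[n]`, then `Pr[Φ(J) - E[Φ(J)] > ε] ≤ exp(-2ε²/(m c²))`. -/
theorem generalized_mcdiarmid (n m : ℕ) (hm : m ≤ n) (hn : 0 < n)
    (Φ : (Fin m → Fin n) → ℝ) (c ε : ℝ) (hε : 0 < ε)
    (hΦ0 : ∀ J, 0 ≤ Φ J)
    (hperm : ∀ (J : Fin m → Fin n) (σ : Equiv.Perm (Fin m)), Φ (J ∘ σ) = Φ J)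
    (hdiff : ∀ J J' : Fin m → Fin n, Function.Injective J → Function.Injective J' →
      ∀ i : Fin m, (∀ k, k ≠ i → J k = J' k) → |Φ J - Φ J'| ≤ c) :
    ((Finset.univ.filter (fun J : {J : Fin m → Fin n // Function.Injective J} =>
        Φ J.1 - (∑ J' : {J : Fin m → Fin n // Function.Injective J}, Φ J'.1) /
          (Fintype.card {J : Fin m → Fin n // Function.Injective J}) > ε)).card : ℝ) /
      (Fintype.card {J : Fin m → Fin n // Function.Injective J}) ≤
    Real.exp (-2 * ε ^ 2 / (m * c ^ 2)) :=
  generalized_mcdiarmid_general n m Φ c ε hε hperm hdiff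
end

section
/- Let $X$ and $Y$ each be uniform without-replacement samples of length $m$ from $[n]$ conditioned to share a common prefix $j_1,\dots,j_{i-1}$, with $X_i = j_i$ fixed. Conditioned on the event that $Y_i \neq j_i$, $Y_i \notin \{X_{i+1},\dots,X_m\}$, and $j_i \notin \{Y_{i+1},\dots,Y_m\}$, and conditioned on the value of $Y_i$, the suffixes $(X_{i+1},\dots,X_m)$ and $(Y_{i+1},\dots,Y_m)$ have identical distributions, namely uniform without-replacement samples of length $m-i$ from $[n] \setminus \{j_1,\dots,j_i, Y_i\}$. -/
open Classical Finset

private theorem count_den (n m : ℕ) (t : Fin m) (j : Fin m → Fin n)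
    (hj : Function.Injective j) (y : Fin n) (hy : ∀ k, k ≤ t → y ≠ j k) :
    (Finset.univ.filter (fun X : {J : Fin m → Fin n // Function.Injective J} =>
      (∀ k, k ≤ t → X.1 k = j k) ∧ (∀ k, t < k → X.1 k ≠ y))).card
    = (n - ((t : ℕ) + 2)).descFactorial (m - ((t : ℕ) + 1)) := by
  classical
  rw [← Fintype.card_subtype]
  have e : {X : {J : Fin m → Fin n // Function.Injective J} //
      (∀ k, k ≤ t → X.1 k = j k) ∧ (∀ k, t < k → X.1 k ≠ y)} ≃
      ({k : Fin m // t < k} ↪ {v : Fin n // v ≠ y ∧ ∀ l, l ≤ t → v ≠ j l}) := by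
    refine
      { toFun := fun X => ⟨fun k => ⟨X.1.1 k.1, X.2.2 k.1 k.2, fun l hl hval => ?_⟩,
          fun a b hab => Subtype.ext (X.1.2 (congrArg Subtype.val hab))⟩
        invFun := fun F => ⟨⟨fun k => if h : t < k then (F ⟨k, h⟩).1 else j k, ?_⟩,
          fun k hk => ?_, fun k hk => ?_⟩
        left_inv := ?_
        right_inv := ?_ }
    · -- forward: X k ≠ j l for l ≤ t
      have h1 : X.1.1 k.1 = X.1.1 l := hval.trans (X.2.1 l hl).symm
      exact absurd hl (not_le.mpr ((X.1.2 h1) ▸ k.2))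
    · -- injectivity of glued function
      intro a b hab
      dsimp only at hab
      by_cases ha : t < a
      · by_cases hb : t < b
        · rw [dif_pos ha, dif_pos hb] at hab
          exact Subtype.ext_iff.mp (F.injective (Subtype.ext hab))
        · rw [dif_pos ha, dif_neg hb] at hab
          exact absurd hab ((F ⟨a, ha⟩).2.2 b (not_lt.mp hb))
      · by_cases hb : t < b
        · rw [dif_neg ha, dif_pos hb] at hab
          exact absurd hab.symm ((F ⟨b, hb⟩).2.2 a (not_lt.mp ha))
        · rw [dif_neg ha, dif_neg hb] at hab
          exact hj hab
    · -- prefix condition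
      show (if h : t < k then ((F ⟨k, h⟩ : {v : Fin n // _}) : Fin n) else j k) = j k
      rw [dif_neg (not_lt.mpr hk)]
    · -- suffix ≠ y
      show (if h : t < k then ((F ⟨k, h⟩ : {v : Fin n // _}) : Fin n) else j k) ≠ y
      rw [dif_pos hk]
      exact (F ⟨k, hk⟩).2.1
    · -- left inverse
      intro X
      apply Subtype.ext; apply Subtype.ext; funext k
      show (if h : t < k then X.1.1 k else j k) = X.1.1 k
      by_cases h : t < k
      · rw [dif_pos h]
      · rw [dif_neg h]
        exact (X.2.1 k (not_lt.mp h)).symm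
    · -- right inverse
      intro F
      refine DFunLike.ext _ _ (fun k => Subtype.ext ?_)
      exact dif_pos k.2
  rw [Fintype.card_congr e, Fintype.card_embedding_eq]
  congr 1
  · -- card of target
    rw [Fintype.card_subtype]
    have h1 : (univ.filter (fun v : Fin n => v ≠ y ∧ ∀ l, l ≤ t → v ≠ j l))
        = univ \ insert y ((Finset.Iic t).image j) := by
      ext v
      simp only [mem_filter, mem_univ, true_and, mem_sdiff, mem_insert, mem_image, mem_Iic,
        not_or, not_exists, not_and]
      constructor
      · rintro ⟨h1, h2⟩
        exact ⟨h1, fun l hl hv => h2 l hl hv.symm⟩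
      · rintro ⟨h1, h2⟩
        exact ⟨h1, fun l hl hv => h2 l hl hv.symm⟩
    have hnm : y ∉ (Finset.Iic t).image j := by
      simp only [mem_image, mem_Iic, not_exists, not_and]
      exact fun l hl hv => hy l hl hv.symm
    rw [h1, Finset.card_sdiff_of_subset (Finset.subset_univ _), Finset.card_univ, Fintype.card_fin,
      Finset.card_insert_of_notMem hnm, Finset.card_image_of_injective _ hj, Fin.card_Iic]
  · -- card of source
    rw [Fintype.card_subtype]
    have h2 : (univ.filter (fun k : Fin m => t < k)) = Finset.Ioi t := by
      ext k; simp [Finset.mem_Ioi]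
    rw [h2, Fin.card_Ioi]
    omega

private theorem count_num (n m : ℕ) (t : Fin m) (j : Fin m → Fin n)
    (hj : Function.Injective j) (y : Fin n) (hy : ∀ k, k ≤ t → y ≠ j k) (g : Fin m → Fin n) :
    (Finset.univ.filter (fun X : {J : Fin m → Fin n // Function.Injective J} =>
      ((∀ k, k ≤ t → X.1 k = j k) ∧ (∀ k, t < k → X.1 k ≠ y)) ∧
        (∀ k, t < k → X.1 k = g k))).card
    = if (∀ k₁ k₂, t < k₁ → t < k₂ → g k₁ = g k₂ → k₁ = k₂) ∧
        (∀ k, t < k → g k ≠ y ∧ ∀ l, l ≤ t → g k ≠ j l) then 1 else 0 := by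
  classical
  split_ifs with hgood
  · -- singleton
    obtain ⟨hg1, hg2⟩ := hgood
    have hinj : Function.Injective (fun k : Fin m => if k ≤ t then j k else g k) := by
      intro a b hab
      dsimp only at hab
      by_cases ha : a ≤ t
      · by_cases hb : b ≤ t
        · rw [if_pos ha, if_pos hb] at hab; exact hj hab
        · rw [if_pos ha, if_neg hb] at hab
          exact absurd hab.symm ((hg2 b (not_le.mp hb)).2 a ha)
      · by_cases hb : b ≤ t
        · rw [if_neg ha, if_pos hb] at hab
          exact absurd hab ((hg2 a (not_le.mp ha)).2 b hb)
        · rw [if_neg ha, if_neg hb] at hab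
          exact hg1 a b (not_le.mp ha) (not_le.mp hb) hab
    have : (Finset.univ.filter (fun X : {J : Fin m → Fin n // Function.Injective J} =>
        ((∀ k, k ≤ t → X.1 k = j k) ∧ (∀ k, t < k → X.1 k ≠ y)) ∧
          (∀ k, t < k → X.1 k = g k))) = {⟨_, hinj⟩} := by
      ext X
      simp only [mem_filter, mem_univ, true_and, mem_singleton]
      constructor
      · rintro ⟨⟨h1, _⟩, h3⟩
        apply Subtype.ext; funext k
        by_cases hk : k ≤ t
        · rw [h1 k hk]; exact (if_pos hk).symm
        · rw [h3 k (not_le.mp hk)]; exact (if_neg hk).symm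
      · rintro rfl
        refine ⟨⟨fun k hk => if_pos hk, fun k hk => ?_⟩, fun k hk => if_neg (not_le.mpr hk)⟩
        show (if k ≤ t then j k else g k) ≠ y
        rw [if_neg (not_le.mpr hk)]
        exact (hg2 k hk).1
    rw [this, Finset.card_singleton]
  · -- empty
    rw [Finset.card_eq_zero, Finset.filter_eq_empty_iff]
    intro X _
    rintro ⟨⟨h1, h2⟩, h3⟩
    apply hgood
    constructor
    · intro k₁ k₂ hk₁ hk₂ hg
      exact X.2 (by rw [h3 k₁ hk₁, h3 k₂ hk₂, hg])
    · intro k hk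
      refine ⟨by rw [← h3 k hk]; exact h2 k hk, fun l hl hv => ?_⟩
      have : X.1 k = X.1 l := by rw [h3 k hk, h1 l hl, hv]
      have := X.2 this
      rw [this] at hk
      exact absurd hl (not_le.mpr hk)

private theorem card_swap_den (n m : ℕ) (t : Fin m) (j : Fin m → Fin n)
    (hj : Function.Injective j) (y : Fin n) (hy : ∀ k, k ≤ t → y ≠ j k) :
    (Finset.univ.filter (fun X : {J : Fin m → Fin n // Function.Injective J} =>
      (∀ k, k ≤ t → X.1 k = j k) ∧ (∀ k, t < k → X.1 k ≠ y))).card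
    = (Finset.univ.filter (fun Y : {J : Fin m → Fin n // Function.Injective J} =>
      (∀ k, k < t → Y.1 k = j k) ∧ Y.1 t = y ∧ (∀ k, t < k → Y.1 k ≠ j t))).card := by
  classical
  set σ := Equiv.swap (j t) y with hσ
  have hpre : ∀ k : Fin m, k < t → σ (j k) = j k := by
    intro k hk
    exact Equiv.swap_apply_of_ne_of_ne (fun h => (ne_of_lt hk) (hj h)) (fun h => hy k hk.le h.symm)
  apply Finset.card_bij'
    (i := fun X _ => (⟨σ ∘ X.1, σ.injective.comp X.2⟩ : {J : Fin m → Fin n // Function.Injective J}))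
    (j := fun Y _ => (⟨σ ∘ Y.1, σ.injective.comp Y.2⟩ : {J : Fin m → Fin n // Function.Injective J}))
  · -- forward membership
    intro X hX
    simp only [mem_filter, mem_univ, true_and] at hX ⊢
    obtain ⟨h1, h2⟩ := hX
    have hXt : X.1 t = j t := h1 t le_rfl
    have hsfix : ∀ k, t < k → σ (X.1 k) = X.1 k := by
      intro k hk
      refine Equiv.swap_apply_of_ne_of_ne (fun h => ?_) (h2 k hk)
      exact (ne_of_lt hk).symm (X.2 (show X.1 k = X.1 t by rw [h, hXt]))
    refine ⟨fun k hk => ?_, ?_, fun k hk => ?_⟩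
    · show σ (X.1 k) = j k
      rw [h1 k hk.le]; exact hpre k hk
    · show σ (X.1 t) = y
      rw [hXt]; exact Equiv.swap_apply_left _ _
    · show σ (X.1 k) ≠ j t
      rw [hsfix k hk]
      intro h
      exact (ne_of_lt hk).symm (X.2 (show X.1 k = X.1 t by rw [h, hXt]))
  · -- backward membership
    intro Y hY
    simp only [mem_filter, mem_univ, true_and] at hY ⊢
    obtain ⟨h1, h2, h3⟩ := hY
    have hsfix : ∀ k, t < k → σ (Y.1 k) = Y.1 k := by
      intro k hk
      refine Equiv.swap_apply_of_ne_of_ne (h3 k hk) (fun h => ?_)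
      exact (ne_of_lt hk).symm (Y.2 (show Y.1 k = Y.1 t by rw [h, h2]))
    refine ⟨fun k hk => ?_, fun k hk => ?_⟩
    · show σ (Y.1 k) = j k
      rcases lt_or_eq_of_le hk with hk' | hk'
      · rw [h1 k hk']; exact hpre k hk'
      · subst hk'; rw [h2]; exact Equiv.swap_apply_right _ _
    · show σ (Y.1 k) ≠ y
      rw [hsfix k hk]
      intro h
      exact (ne_of_lt hk).symm (Y.2 (show Y.1 k = Y.1 t by rw [h, h2]))
  · intro X hX
    apply Subtype.ext; funext k
    exact Equiv.swap_apply_self _ _ _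
  · intro Y hY
    apply Subtype.ext; funext k
    exact Equiv.swap_apply_self _ _ _

private theorem card_swap_num (n m : ℕ) (t : Fin m) (j : Fin m → Fin n)
    (hj : Function.Injective j) (y : Fin n) (hy : ∀ k, k ≤ t → y ≠ j k) (g : Fin m → Fin n) :
    (Finset.univ.filter (fun X : {J : Fin m → Fin n // Function.Injective J} =>
      ((∀ k, k ≤ t → X.1 k = j k) ∧ (∀ k, t < k → X.1 k ≠ y)) ∧
        (∀ k, t < k → X.1 k = g k))).card
    = (Finset.univ.filter (fun Y : {J : Fin m → Fin n // Function.Injective J} =>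
      ((∀ k, k < t → Y.1 k = j k) ∧ Y.1 t = y ∧ (∀ k, t < k → Y.1 k ≠ j t)) ∧
        (∀ k, t < k → Y.1 k = g k))).card := by
  classical
  set σ := Equiv.swap (j t) y with hσ
  have hpre : ∀ k : Fin m, k < t → σ (j k) = j k := by
    intro k hk
    exact Equiv.swap_apply_of_ne_of_ne (fun h => (ne_of_lt hk) (hj h)) (fun h => hy k hk.le h.symm)
  apply Finset.card_bij'
    (i := fun X _ => (⟨σ ∘ X.1, σ.injective.comp X.2⟩ : {J : Fin m → Fin n // Function.Injective J}))
    (j := fun Y _ => (⟨σ ∘ Y.1, σ.injective.comp Y.2⟩ : {J : Fin m → Fin n // Function.Injective J}))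
  · -- forward membership
    intro X hX
    simp only [mem_filter, mem_univ, true_and] at hX ⊢
    obtain ⟨⟨h1, h2⟩, h3⟩ := hX
    have hXt : X.1 t = j t := h1 t le_rfl
    have hsfix : ∀ k, t < k → σ (X.1 k) = X.1 k := by
      intro k hk
      refine Equiv.swap_apply_of_ne_of_ne (fun h => ?_) (h2 k hk)
      exact (ne_of_lt hk).symm (X.2 (show X.1 k = X.1 t by rw [h, hXt]))
    refine ⟨⟨fun k hk => ?_, ?_, fun k hk => ?_⟩, fun k hk => ?_⟩
    · show σ (X.1 k) = j k
      rw [h1 k hk.le]; exact hpre k hk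
    · show σ (X.1 t) = y
      rw [hXt]; exact Equiv.swap_apply_left _ _
    · show σ (X.1 k) ≠ j t
      rw [hsfix k hk]
      intro h
      exact (ne_of_lt hk).symm (X.2 (show X.1 k = X.1 t by rw [h, hXt]))
    · show σ (X.1 k) = g k
      rw [hsfix k hk]; exact h3 k hk
  · -- backward membership
    intro Y hY
    simp only [mem_filter, mem_univ, true_and] at hY ⊢
    obtain ⟨⟨h1, h2, h3⟩, h4⟩ := hY
    have hsfix : ∀ k, t < k → σ (Y.1 k) = Y.1 k := by
      intro k hk
      refine Equiv.swap_apply_of_ne_of_ne (h3 k hk) (fun h => ?_)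
      exact (ne_of_lt hk).symm (Y.2 (show Y.1 k = Y.1 t by rw [h, h2]))
    refine ⟨⟨fun k hk => ?_, fun k hk => ?_⟩, fun k hk => ?_⟩
    · show σ (Y.1 k) = j k
      rcases lt_or_eq_of_le hk with hk' | hk'
      · rw [h1 k hk']; exact hpre k hk'
      · subst hk'; rw [h2]; exact Equiv.swap_apply_right _ _
    · show σ (Y.1 k) ≠ y
      rw [hsfix k hk]
      intro h
      exact (ne_of_lt hk).symm (Y.2 (show Y.1 k = Y.1 t by rw [h, h2]))
    · show σ (Y.1 k) = g k
      rw [hsfix k hk]; exact h4 k hk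
  · intro X hX
    apply Subtype.ext; funext k
    exact Equiv.swap_apply_self _ _ _
  · intro Y hY
    apply Subtype.ext; funext k
    exact Equiv.swap_apply_self _ _ _

open Classical Finset in
/-- Conditioned on the exclusion events of case `E₂`, the suffixes of `X` and `Y` after
position `t` (0-based, `i = t+1`) have identical distributions, namely uniform
without-replacement samples of length `m - (t+1)` from `[n] \ {j_1,…,j_{t+1}, y}`
(a set of size `n - t - 2`).  Here `X` is conditioned on prefix `j` up to `t` and on
`y ∉ {X_{t+2},…}`, while `Y` is conditioned on prefix `j` below `t`, `Y_t = y`, and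
`j_t ∉ {Y_{t+2},…}`. -/
theorem suffix_distributions_equal (n m : ℕ) (hm : m ≤ n) (t : Fin m)
    (ht : (t : ℕ) + 1 < m) (j : Fin m → Fin n) (hj : Function.Injective j)
    (y : Fin n) (hy : ∀ k, k ≤ t → y ≠ j k) :
    ∀ g : Fin m → Fin n,
      (((Finset.univ.filter (fun X : {J : Fin m → Fin n // Function.Injective J} =>
            ((∀ k, k ≤ t → X.1 k = j k) ∧ (∀ k, t < k → X.1 k ≠ y)) ∧
              (∀ k, t < k → X.1 k = g k))).card : ℝ) /
          ((Finset.univ.filter (fun X : {J : Fin m → Fin n // Function.Injective J} =>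
            (∀ k, k ≤ t → X.1 k = j k) ∧ (∀ k, t < k → X.1 k ≠ y))).card : ℝ) =
        ((Finset.univ.filter (fun Y : {J : Fin m → Fin n // Function.Injective J} =>
            ((∀ k, k < t → Y.1 k = j k) ∧ Y.1 t = y ∧ (∀ k, t < k → Y.1 k ≠ j t)) ∧
              (∀ k, t < k → Y.1 k = g k))).card : ℝ) /
          ((Finset.univ.filter (fun Y : {J : Fin m → Fin n // Function.Injective J} =>
            (∀ k, k < t → Y.1 k = j k) ∧ Y.1 t = y ∧
              (∀ k, t < k → Y.1 k ≠ j t))).card : ℝ)) ∧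
      (((Finset.univ.filter (fun X : {J : Fin m → Fin n // Function.Injective J} =>
            ((∀ k, k ≤ t → X.1 k = j k) ∧ (∀ k, t < k → X.1 k ≠ y)) ∧
              (∀ k, t < k → X.1 k = g k))).card : ℝ) /
          ((Finset.univ.filter (fun X : {J : Fin m → Fin n // Function.Injective J} =>
            (∀ k, k ≤ t → X.1 k = j k) ∧ (∀ k, t < k → X.1 k ≠ y))).card : ℝ) =
        if (∀ k₁ k₂, t < k₁ → t < k₂ → g k₁ = g k₂ → k₁ = k₂) ∧
            (∀ k, t < k → g k ≠ y ∧ ∀ l, l ≤ t → g k ≠ j l) then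
          1 / ((n - ((t : ℕ) + 2)).descFactorial (m - ((t : ℕ) + 1)) : ℝ)
        else 0) := by
  intro g
  constructor
  · -- ratios equal via swap bijection
    rw [card_swap_num n m t j hj y hy g, card_swap_den n m t j hj y hy]
  · rw [count_num n m t j hj y hy g, count_den n m t j hj y hy]
    split_ifs with h
    · norm_num
    · norm_num
end
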